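/- Let (V, Q) be an FBAS that has at least one quorum and enjoys quorum intersection, and whose top tier T is self-centered, i.e., for every v ∈ T and every slice q ∈ Q(v), q ⊆ T. Let Q′ be any quorum function on V (with every slice in Q′(v) containing v) such that Q′(v) = Q(v) for all v ∈ T. If the FBAS (V, Q′) enjoys quorum intersection, then the set of minimal quorums of (V, Q′) equals the set of minimal quorums of (V, Q), and in particular the top tier of (V, Q′) equals T. Hence no change of only the quorum sets of non-top-tier nodes can produce a new top tier T′ ≠ T while preserving quorum intersection. -/

import Mathlib

open Finset

variable {α : Type*} [DecidableEq α]

/-- `U` is a quorum of the FBAS `(V, Q)`: a nonempty subset of `V` containing,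
for every member `v`, some slice `q ∈ Q v` with `q ⊆ U`. -/
def IsQuorum (V : Finset α) (Q : α → Finset (Finset α)) (U : Finset α) : Prop :=
  U ⊆ V ∧ U.Nonempty ∧ ∀ v ∈ U, ∃ q ∈ Q v, q ⊆ U

/-- A minimal quorum: a quorum none of whose proper subsets is a quorum. -/
def IsMinimalQuorum (V : Finset α) (Q : α → Finset (Finset α)) (U : Finset α) : Prop :=
  IsQuorum V Q U ∧ ∀ U' ⊂ U, ¬IsQuorum V Q U'

/-- A blocking set: a subset of `V` intersecting every quorum of `(V, Q)`. -/
def IsBlocking (V : Finset α) (Q : α → Finset (Finset α)) (B : Finset α) : Prop :=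
  B ⊆ V ∧ ∀ U, IsQuorum V Q U → (B ∩ U).Nonempty

/-- A minimal blocking set: a blocking set none of whose proper subsets is blocking. -/
def IsMinimalBlocking (V : Finset α) (Q : α → Finset (Finset α)) (B : Finset α) : Prop :=
  IsBlocking V Q B ∧ ∀ B' ⊂ B, ¬IsBlocking V Q B'

/-- A splitting set: a subset of `V` containing the intersection of two distinct quorums. -/
def IsSplitting (V : Finset α) (Q : α → Finset (Finset α)) (S : Finset α) : Prop :=
  S ⊆ V ∧ ∃ U₁ U₂, IsQuorum V Q U₁ ∧ IsQuorum V Q U₂ ∧ U₁ ≠ U₂ ∧ U₁ ∩ U₂ ⊆ S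

/-- A minimal splitting set: a splitting set none of whose proper subsets is splitting. -/
def IsMinimalSplitting (V : Finset α) (Q : α → Finset (Finset α)) (S : Finset α) : Prop :=
  IsSplitting V Q S ∧ ∀ S' ⊂ S, ¬IsSplitting V Q S'

/-- Well-formedness of an FBAS `(V, Q)`: every slice of every node `v ∈ V`
contains `v` and is a subset of `V`. -/
def WellFormed (V : Finset α) (Q : α → Finset (Finset α)) : Prop :=
  ∀ v ∈ V, ∀ q ∈ Q v, v ∈ q ∧ q ⊆ V

/-- `T` is the top tier of `(V, Q)`: the union of all minimal quorums. -/
def IsTopTier (V : Finset α) (Q : α → Finset (Finset α)) (T : Finset α) : Prop :=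
  ∀ v, v ∈ T ↔ ∃ U, IsMinimalQuorum V Q U ∧ v ∈ U

/-- `(V, Q)` enjoys quorum intersection: any two quorums share a node. -/
def QuorumIntersection (V : Finset α) (Q : α → Finset (Finset α)) : Prop :=
  ∀ U₁ U₂, IsQuorum V Q U₁ → IsQuorum V Q U₂ → (U₁ ∩ U₂).Nonempty

/-!
Inside `T` the two systems have the same slices, so a set contained in `T` is a (minimal) quorum
for `Q` iff it is one for `Q'`; minimal `Q`-quorums lie in `T` by definition of the top tier.
Conversely, `T` is closed under `Q'`-slices, so intersecting a `Q'`-quorum with `T` yields a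
`Q'`-quorum as soon as the intersection is nonempty. By `Q'`-quorum intersection every minimal
`Q'`-quorum meets a minimal `Q`-quorum, hence meets `T`, and minimality forces it inside `T`.
-/

section

omit [DecidableEq α]

variable {V T U : Finset α} {Q Q' : α → Finset (Finset α)}

theorem isQuorum_congr_of_eqOn (hU : ∀ v ∈ U, Q' v = Q v) :
    IsQuorum V Q' U ↔ IsQuorum V Q U := by
  refine and_congr_right fun _ => and_congr_right fun _ => forall₂_congr fun v hv => ?_
  rw [hU v hv]

theorem isMinimalQuorum_congr_of_eqOn (hU : ∀ v ∈ U, Q' v = Q v) :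
    IsMinimalQuorum V Q' U ↔ IsMinimalQuorum V Q U := by
  refine and_congr (isQuorum_congr_of_eqOn hU) (forall₂_congr fun U' hU' => ?_)
  rw [isQuorum_congr_of_eqOn fun v hv => hU v (hU'.subset hv)]

theorem IsQuorum.exists_isMinimalQuorum_subset (hU : IsQuorum V Q U) :
    ∃ M ⊆ U, IsMinimalQuorum V Q M := by
  induction U using Finset.strongInduction with
  | H U ih =>
    by_cases hsmaller : ∃ U' ⊂ U, IsQuorum V Q U'
    · obtain ⟨U', hU'U, hU'⟩ := hsmaller
      obtain ⟨M, hMU', hM⟩ := ih U' hU'U hU'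
      exact ⟨M, hMU'.trans hU'U.subset, hM⟩
    · exact ⟨U, Subset.rfl, hU, fun U' hU'U hU' => hsmaller ⟨U', hU'U, hU'⟩⟩

theorem IsTopTier.subset_of_isMinimalQuorum (hT : IsTopTier V Q T)
    (hU : IsMinimalQuorum V Q U) : U ⊆ T :=
  fun v hv => (hT v).2 ⟨U, hU, hv⟩

end

section

variable {V T U : Finset α} {Q : α → Finset (Finset α)}

theorem IsQuorum.inter_of_slices_subset (hU : IsQuorum V Q U)
    (hT : ∀ v ∈ T, ∀ q ∈ Q v, q ⊆ T) (hUT : (U ∩ T).Nonempty) :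
    IsQuorum V Q (U ∩ T) := by
  refine ⟨inter_subset_left.trans hU.1, hUT, fun v hv => ?_⟩
  rw [mem_inter] at hv
  obtain ⟨q, hq, hqU⟩ := hU.2.2 v hv.1
  exact ⟨q, hq, subset_inter hqU (hT v hv.2 q hq)⟩

theorem IsMinimalQuorum.subset_of_slices_subset (hU : IsMinimalQuorum V Q U)
    (hT : ∀ v ∈ T, ∀ q ∈ Q v, q ⊆ T) (hUT : (U ∩ T).Nonempty) : U ⊆ T := by
  by_contra hsub
  refine hU.2 (U ∩ T) (Finset.ssubset_iff_subset_ne.2 ⟨inter_subset_left, fun h => hsub ?_⟩)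
    (hU.1.inter_of_slices_subset hT hUT)
  rw [← h]
  exact inter_subset_right

end

theorem no_bottom_up_top_tier_change_general
    (V : Finset α) (Q Q' : α → Finset (Finset α))
    (havail : ∃ U, IsQuorum V Q U)
    (T : Finset α) (hT : IsTopTier V Q T)
    (hself : ∀ v ∈ T, ∀ q ∈ Q v, q ⊆ T)
    (hsame : ∀ v ∈ T, Q' v = Q v)
    (hQI' : QuorumIntersection V Q') :
    (∀ U, IsMinimalQuorum V Q' U ↔ IsMinimalQuorum V Q U) ∧ IsTopTier V Q' T := by
  have hself' : ∀ v ∈ T, ∀ q ∈ Q' v, q ⊆ T := fun v hv => hsame v hv ▸ hself v hv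
  obtain ⟨U₀, hU₀T, hU₀⟩ : ∃ U₀ ⊆ T, IsQuorum V Q' U₀ := by
    obtain ⟨U, hU⟩ := havail
    obtain ⟨M, -, hM⟩ := hU.exists_isMinimalQuorum_subset
    have hMT := hT.subset_of_isMinimalQuorum hM
    exact ⟨M, hMT, (isQuorum_congr_of_eqOn fun v hv => hsame v (hMT hv)).2 hM.1⟩
  have hiff : ∀ U, IsMinimalQuorum V Q' U ↔ IsMinimalQuorum V Q U := by
    refine fun U => ⟨fun hU => ?_, fun hU => ?_⟩
    · have hUT : U ⊆ T := hU.subset_of_slices_subset hself'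
        ((hQI' U U₀ hU.1 hU₀).mono (inter_subset_inter_left hU₀T))
      exact (isMinimalQuorum_congr_of_eqOn fun v hv => hsame v (hUT hv)).1 hU
    · have hUT := hT.subset_of_isMinimalQuorum hU
      exact (isMinimalQuorum_congr_of_eqOn fun v hv => hsame v (hUT hv)).2 hU
  exact ⟨hiff, fun v => (hT v).trans (exists_congr fun U => and_congr_left' (hiff U).symm)⟩

/-- with a self-centered top tier `T`, no change of only the
quorum sets of non-top-tier nodes can alter the set of minimal quorums (and
hence the top tier) while preserving quorum intersection. -/
theorem no_bottom_up_top_tier_change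
    (V : Finset α) (Q Q' : α → Finset (Finset α))
    (hwf : WellFormed V Q) (hwf' : WellFormed V Q')
    (havail : ∃ U, IsQuorum V Q U) (hQI : QuorumIntersection V Q)
    (T : Finset α) (hT : IsTopTier V Q T)
    (hself : ∀ v ∈ T, ∀ q ∈ Q v, q ⊆ T)
    (hsame : ∀ v ∈ T, Q' v = Q v)
    (hQI' : QuorumIntersection V Q') :
    (∀ U, IsMinimalQuorum V Q' U ↔ IsMinimalQuorum V Q U) ∧ IsTopTier V Q' T :=
  no_bottom_up_top_tier_change_general V Q Q' havail T hT hself hsame hQI'
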